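/- arXiv:1807.01584 — 5 statements merged into one kernel-verified Lean document; each statement's English description precedes it below -/
import Mathlib

section
/- Let P be an x-monotone polyomino and let c ∈ ℤ be such that both P≤c = {p ∈ P : p₁ ≤ c} and P>c = {p ∈ P : p₁ > c} are nonempty. Then P≤c and P>c are x-monotone polyominoes (in particular, each induces a connected grid graph), and the partition (P≤c, P>c) is a valid vertical straight 2-cut of P at position c. -/
/-- Two grid points are adjacent if they are at Euclidean distance 1. -/
def Adj (p q : ℤ × ℤ) : Prop := |p.1 - q.1| + |p.2 - q.2| = 1

/-- A set of grid points induces a connected grid graph. -/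
def GridConnected (S : Set (ℤ × ℤ)) : Prop :=
  ∀ p ∈ S, ∀ q ∈ S,
    Relation.ReflTransGen (fun a b => a ∈ S ∧ b ∈ S ∧ Adj a b) p q

/-- A polyomino: a finite nonempty set of grid points with connected grid graph. -/
def IsPolyomino (P : Finset (ℤ × ℤ)) : Prop :=
  P.Nonempty ∧ GridConnected ↑P

/-- x-monotone (column convex). -/
def ColumnConvex (S : Set (ℤ × ℤ)) : Prop :=
  ∀ x y₁ y₂ y : ℤ, (x, y₁) ∈ S → (x, y₂) ∈ S → y₁ ≤ y → y ≤ y₂ → (x, y) ∈ S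

/-- y-monotone (row convex). -/
def RowConvex (S : Set (ℤ × ℤ)) : Prop :=
  ∀ y x₁ x₂ x : ℤ, (x₁, y) ∈ S → (x₂, y) ∈ S → x₁ ≤ x → x ≤ x₂ → (x, y) ∈ S

/-- Orthogonally convex. -/
def OrthoConvex (S : Set (ℤ × ℤ)) : Prop := ColumnConvex S ∧ RowConvex S

/-- Simple (hole-free): the complement induces a connected grid graph. -/
def SimplePoly (P : Finset (ℤ × ℤ)) : Prop :=
  GridConnected ((↑P : Set (ℤ × ℤ))ᶜ)

/-- Left piece of the vertical cut at `c`. -/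
def PLe (P : Finset (ℤ × ℤ)) (c : ℤ) : Finset (ℤ × ℤ) :=
  P.filter (fun p => p.1 ≤ c)

/-- Right piece of the vertical cut at `c`. -/
def PGt (P : Finset (ℤ × ℤ)) (c : ℤ) : Finset (ℤ × ℤ) :=
  P.filter (fun p => c < p.1)

/-- Vertical straight 2-cut of `P` at position `c` into left piece `P₁` and right
piece `P₂`. -/
def IsVCut (P P₁ P₂ : Finset (ℤ × ℤ)) (c : ℤ) : Prop :=
  P₁ ∪ P₂ = P ∧ Disjoint P₁ P₂ ∧ P₁.Nonempty ∧ P₂.Nonempty ∧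
  GridConnected ↑P₁ ∧ GridConnected ↑P₂ ∧
  ∀ p ∈ P₁, ∀ q ∈ P₂, Adj p q → p.1 = c ∧ q.1 = c + 1 ∧ p.2 = q.2

/-- Valid vertical straight 2-cut: the pieces can be pulled apart horizontally. -/
def ValidVCut (P P₁ P₂ : Finset (ℤ × ℤ)) (c : ℤ) : Prop :=
  IsVCut P P₁ P₂ c ∧ ∀ k : ℤ, 1 ≤ k → ∀ p ∈ P₂, (p.1 + k, p.2) ∉ P₁

/-- Horizontal straight 2-cut of `P` at position `c` into bottom piece `P₁` and
top piece `P₂` (coordinates exchanged). -/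
def IsHCut (P P₁ P₂ : Finset (ℤ × ℤ)) (c : ℤ) : Prop :=
  P₁ ∪ P₂ = P ∧ Disjoint P₁ P₂ ∧ P₁.Nonempty ∧ P₂.Nonempty ∧
  GridConnected ↑P₁ ∧ GridConnected ↑P₂ ∧
  ∀ p ∈ P₁, ∀ q ∈ P₂, Adj p q → p.2 = c ∧ q.2 = c + 1 ∧ p.1 = q.1

/-- Valid horizontal straight 2-cut: the pieces can be pulled apart vertically. -/
def ValidHCut (P P₁ P₂ : Finset (ℤ × ℤ)) (c : ℤ) : Prop :=
  IsHCut P P₁ P₂ c ∧ ∀ k : ℤ, 1 ≤ k → ∀ p ∈ P₂, (p.1, p.2 + k) ∉ P₁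

/-- The part of the decomposition of `P` by the vertical cut positions `C`
that contains the point `p`. -/
def CutPart (P : Finset (ℤ × ℤ)) (C : Finset ℤ) (p : ℤ × ℤ) : Finset (ℤ × ℤ) :=
  P.filter (fun q => ∀ c ∈ C, (q.1 ≤ c ↔ p.1 ≤ c))

/-- The vertical cut positions `C` decompose `P` into orthogonally convex parts. -/
def Decomposes (P : Finset (ℤ × ℤ)) (C : Finset ℤ) : Prop :=
  ∀ p ∈ P, OrthoConvex ↑(CutPart P C p)

/-- The decomposition number `d(P)`: the minimum number of vertical cut positions
decomposing `P` into orthogonally convex parts. -/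
noncomputable def decompNumber (P : Finset (ℤ × ℤ)) : ℕ :=
  sInf {k | ∃ C : Finset ℤ, C.card = k ∧ Decomposes P C}

/-- `(a, b, y₀)` is a minimum of the upper envelope of `P`. -/
def UpperEnvMin (P : Set (ℤ × ℤ)) (a b y₀ : ℤ) : Prop :=
  a + 2 ≤ b ∧ (∀ x : ℤ, a ≤ x → x ≤ b → (x, y₀) ∈ P) ∧
  (a, y₀ + 1) ∈ P ∧ (b, y₀ + 1) ∈ P ∧ ∀ x : ℤ, a < x → x < b → (x, y₀ + 1) ∉ P

/-- `(a, b, y₀)` is a maximum of the lower envelope of `P`. -/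
def LowerEnvMax (P : Set (ℤ × ℤ)) (a b y₀ : ℤ) : Prop :=
  a + 2 ≤ b ∧ (∀ x : ℤ, a ≤ x → x ≤ b → (x, y₀) ∈ P) ∧
  (a, y₀ - 1) ∈ P ∧ (b, y₀ - 1) ∈ P ∧ ∀ x : ℤ, a < x → x < b → (x, y₀ - 1) ∉ P

/-- The four cells of the 2×2 square with lower-left corner `s`. -/
def SquareCells (s : ℤ × ℤ) : Finset (ℤ × ℤ) :=
  {s, (s.1 + 1, s.2), (s.1, s.2 + 1), (s.1 + 1, s.2 + 1)}

/-- A 2×2 square (given by its lower-left corner `s`) is a reflex witness of `P`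
if it contains exactly three points of `P`. -/
def ReflexWitness (P : Finset (ℤ × ℤ)) (s : ℤ × ℤ) : Prop :=
  (SquareCells s ∩ P).card = 3

/-- The number of reflex witnesses of `P`. -/
noncomputable def wRef (P : Finset (ℤ × ℤ)) : ℕ :=
  Set.ncard {s : ℤ × ℤ | ReflexWitness P s}

/-- A tile `t` is locally reflex: it is the corner tile of some reflex witness,
i.e. the square cell opposite to `t` is the one missing from `P`. -/
def LocallyReflex (P : Finset (ℤ × ℤ)) (t : ℤ × ℤ) : Prop :=
  ∃ s : ℤ × ℤ, ReflexWitness P s ∧ t ∈ SquareCells s ∧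
    (2 * s.1 + 1 - t.1, 2 * s.2 + 1 - t.2) ∉ P

/-- The number of locally reflex tiles of `P`. -/
noncomputable def rRef (P : Finset (ℤ × ℤ)) : ℕ :=
  Set.ncard {t : ℤ × ℤ | LocallyReflex P t}

/-- A tile `t` is locally convex: some 2×2 square contains `t` and no other
point of `P`. -/
def LocallyConvex (P : Finset (ℤ × ℤ)) (t : ℤ × ℤ) : Prop :=
  ∃ s : ℤ × ℤ, t ∈ SquareCells s ∧ SquareCells s ∩ P = {t}

/-- A straight 2-cut `(P₁, P₂)` is along a locally reflex tile of `P`. -/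
def AlongReflex (P P₁ P₂ : Finset (ℤ × ℤ)) : Prop :=
  ∃ s : ℤ × ℤ, ReflexWitness P s ∧ (SquareCells s ∩ P₁).Nonempty ∧
    (SquareCells s ∩ P₂).Nonempty

/-- A valid (not necessarily straight) 2-cut of `P` into `P₁` and `P₂`. -/
def ValidCut (P P₁ P₂ : Finset (ℤ × ℤ)) : Prop :=
  P₁ ∪ P₂ = P ∧ Disjoint P₁ P₂ ∧ P₁.Nonempty ∧ P₂.Nonempty ∧
  GridConnected ↑P₁ ∧ GridConnected ↑P₂ ∧
  ∃ v ∈ ({(1, 0), (-1, 0), (0, 1), (0, -1)} : Set (ℤ × ℤ)),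
    ∀ k : ℤ, 1 ≤ k → ∀ p ∈ P₂, (p.1 + k * v.1, p.2 + k * v.2) ∉ P₁

/-- A polyomino is 2-cuttable: it is orthogonally convex, or some valid 2-cut
splits it into two 2-cuttable polyominoes. -/
inductive TwoCuttable : Finset (ℤ × ℤ) → Prop
  | convex (P : Finset (ℤ × ℤ)) : IsPolyomino P → OrthoConvex ↑P → TwoCuttable P
  | cut (P P₁ P₂ : Finset (ℤ × ℤ)) : ValidCut P P₁ P₂ →
      TwoCuttable P₁ → TwoCuttable P₂ → TwoCuttable P

/-- A polyomino is straight 2-cuttable: it is orthogonally convex, or some valid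
vertical or horizontal straight 2-cut splits it into two straight 2-cuttable
polyominoes. -/
inductive Straight2Cuttable : Finset (ℤ × ℤ) → Prop
  | convex (P : Finset (ℤ × ℤ)) : IsPolyomino P → OrthoConvex ↑P → Straight2Cuttable P
  | vcut (P P₁ P₂ : Finset (ℤ × ℤ)) (c : ℤ) : ValidVCut P P₁ P₂ c →
      Straight2Cuttable P₁ → Straight2Cuttable P₂ → Straight2Cuttable P
  | hcut (P P₁ P₂ : Finset (ℤ × ℤ)) (c : ℤ) : ValidHCut P P₁ P₂ c →
      Straight2Cuttable P₁ → Straight2Cuttable P₂ → Straight2Cuttable P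


/-!
A grid path in `P` between two tiles on the same side of the cut can leave that side only
through the boundary column, and it comes back through the same column. Since `P` is column
convex, every such excursion can be replaced by a vertical segment inside the boundary column,
which lies on the given side.
-/

abbrev GridReach (S : Set (ℤ × ℤ)) : ℤ × ℤ → ℤ × ℤ → Prop :=
  Relation.ReflTransGen (fun a b => a ∈ S ∧ b ∈ S ∧ Adj a b)

lemma Adj.symm {p q : ℤ × ℤ} (h : Adj p q) : Adj q p := by
  unfold Adj at *
  rwa [abs_sub_comm q.1, abs_sub_comm q.2]

lemma Adj.abs_fst_sub_le {p q : ℤ × ℤ} (h : Adj p q) : |p.1 - q.1| ≤ 1 := by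
  unfold Adj at h
  linarith [abs_nonneg (p.2 - q.2)]

lemma Adj.snd_eq_of_fst_ne {p q : ℤ × ℤ} (h : Adj p q) (hne : p.1 ≠ q.1) : p.2 = q.2 := by
  unfold Adj at h
  rw [Int.abs_eq_natAbs, Int.abs_eq_natAbs] at h
  omega

lemma GridReach.symm {S : Set (ℤ × ℤ)} {p q : ℤ × ℤ} (h : GridReach S p q) :
    GridReach S q p :=
  have : Std.Symm fun a b => a ∈ S ∧ b ∈ S ∧ Adj a b :=
    ⟨fun _ _ ⟨ha, hb, hab⟩ => ⟨hb, ha, hab.symm⟩⟩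
  Std.Symm.symm _ _ h

namespace ColumnConvex

variable {S : Set (ℤ × ℤ)}

lemma sep (hS : ColumnConvex S) (r : ℤ → Prop) : ColumnConvex {p ∈ S | r p.1} :=
  fun x y₁ y₂ y h₁ h₂ hy₁ hy₂ => ⟨hS x y₁ y₂ y h₁.1 h₂.1 hy₁ hy₂, h₁.2⟩

lemma gridReach_of_le (hS : ColumnConvex S) {x y₁ y₂ : ℤ} (hy : y₁ ≤ y₂)
    (h₁ : (x, y₁) ∈ S) (h₂ : (x, y₂) ∈ S) : GridReach S (x, y₁) (x, y₂) := by
  induction y₂, hy using Int.leInduction with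
  | base => exact .refl
  | succ y hy ih =>
    have hy_mem : (x, y) ∈ S := hS x y₁ (y + 1) y h₁ h₂ hy (by omega)
    exact .tail (ih hy_mem) ⟨hy_mem, h₂, by simp [Adj]⟩

lemma gridReach (hS : ColumnConvex S) {x y₁ y₂ : ℤ}
    (h₁ : (x, y₁) ∈ S) (h₂ : (x, y₂) ∈ S) : GridReach S (x, y₁) (x, y₂) := by
  rcases le_total y₁ y₂ with hy | hy
  · exact hS.gridReach_of_le hy h₁ h₂
  · exact (hS.gridReach_of_le hy h₂ h₁).symm

lemma gridConnected_sep (hS : ColumnConvex S) (hconn : GridConnected S) (r : ℤ → Prop)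
    (b : ℤ) (hcross : ∀ x x', r x → ¬ r x' → |x - x'| ≤ 1 → x = b) :
    GridConnected {p ∈ S | r p.1} := by
  set T := {p ∈ S | r p.1}
  intro p hp q hq
  -- walking backwards from `q`, a tile outside `T` is traded for a tile of column `b`
  suffices key : ∀ a, GridReach S a q →
      (a ∈ T → GridReach T a q) ∧
      (a ∈ S → ¬ r a.1 → ∃ y, (b, y) ∈ T ∧ GridReach T (b, y) q) from
    (key p (hconn p hp.1 q hq.1)).1 hp
  intro a ha
  induction ha using Relation.ReflTransGen.head_induction_on with
  | refl => exact ⟨fun _ => .refl, fun _ hq' => absurd hq.2 hq'⟩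
  | @head a a' hstep _ ih =>
    obtain ⟨ha, ha', hadj⟩ := hstep
    by_cases hra' : r a'.1
    · have hreach' := ih.1 ⟨ha', hra'⟩
      refine ⟨fun haT => .head ⟨haT, ⟨ha', hra'⟩, hadj⟩ hreach', fun _ hra => ?_⟩
      have hb' : a'.1 = b := hcross _ _ hra' hra (by rw [abs_sub_comm]; exact hadj.abs_fst_sub_le)
      exact ⟨a'.2, by rw [← hb']; exact ⟨ha', hra'⟩, by rw [← hb']; exact hreach'⟩
    · obtain ⟨y, hyT, hreach⟩ := ih.2 ha' hra'
      refine ⟨fun haT => ?_, fun _ _ => ⟨y, hyT, hreach⟩⟩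
      have hab : a.1 = b := hcross _ _ haT.2 hra' hadj.abs_fst_sub_le
      have ha_eq : a = (b, a.2) := by rw [← hab]
      rw [ha_eq] at haT ⊢
      exact ((hS.sep r).gridReach haT hyT).trans hreach

end ColumnConvex

section VerticalCut

variable {P : Finset (ℤ × ℤ)} {c : ℤ}

lemma coe_PLe : (↑(PLe P c) : Set (ℤ × ℤ)) = {p ∈ (↑P : Set (ℤ × ℤ)) | p.1 ≤ c} :=
  Finset.coe_filter _ _

lemma coe_PGt : (↑(PGt P c) : Set (ℤ × ℤ)) = {p ∈ (↑P : Set (ℤ × ℤ)) | c < p.1} :=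
  Finset.coe_filter _ _

lemma PLe_union_PGt : PLe P c ∪ PGt P c = P := by
  ext p
  simp only [PLe, PGt, Finset.mem_union, Finset.mem_filter]
  constructor
  · rintro (h | h) <;> exact h.1
  · intro hp
    exact (le_or_gt p.1 c).imp (⟨hp, ·⟩) (⟨hp, ·⟩)

lemma disjoint_PLe_PGt : Disjoint (PLe P c) (PGt P c) :=
  Finset.disjoint_filter.2 fun _ _ hle hgt => (not_lt.2 hle) hgt

lemma Adj.cross_vertical {p q : ℤ × ℤ} (hp : p.1 ≤ c) (hq : c < q.1) (h : Adj p q) :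
    p.1 = c ∧ q.1 = c + 1 ∧ p.2 = q.2 := by
  have h₁ := abs_le.1 h.abs_fst_sub_le
  exact ⟨by omega, by omega, h.snd_eq_of_fst_ne (by omega)⟩

lemma columnConvex_PLe (hmono : ColumnConvex ↑P) : ColumnConvex ↑(PLe P c) :=
  coe_PLe ▸ hmono.sep (· ≤ c)

lemma columnConvex_PGt (hmono : ColumnConvex ↑P) : ColumnConvex ↑(PGt P c) :=
  coe_PGt ▸ hmono.sep (c < ·)

lemma gridConnected_PLe (hmono : ColumnConvex ↑P) (hconn : GridConnected ↑P) :
    GridConnected ↑(PLe P c) :=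
  coe_PLe ▸ hmono.gridConnected_sep hconn (· ≤ c) c fun x x' hx hx' hxx' => by
    have := abs_le.1 hxx'
    omega

lemma gridConnected_PGt (hmono : ColumnConvex ↑P) (hconn : GridConnected ↑P) :
    GridConnected ↑(PGt P c) :=
  coe_PGt ▸ hmono.gridConnected_sep hconn (c < ·) (c + 1) fun x x' hx hx' hxx' => by
    have := abs_le.1 hxx'
    omega

lemma validVCut_PLe_PGt (h₁ : (PLe P c).Nonempty) (h₂ : (PGt P c).Nonempty)
    (hL : GridConnected ↑(PLe P c)) (hG : GridConnected ↑(PGt P c)) :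
    ValidVCut P (PLe P c) (PGt P c) c := by
  refine ⟨⟨PLe_union_PGt, disjoint_PLe_PGt, h₁, h₂, hL, hG, ?_⟩, ?_⟩
  · intro p hp q hq hadj
    exact hadj.cross_vertical (Finset.mem_filter.1 hp).2 (Finset.mem_filter.1 hq).2
  · intro k hk p hp hmem
    have := (Finset.mem_filter.1 hp).2
    have := (Finset.mem_filter.1 hmem).2
    dsimp only at *
    omega

end VerticalCut

/-- Cutting an x-monotone polyomino vertically at `c` (both pieces
nonempty) yields two x-monotone polyominoes, and `(P≤c, P>c)` is a valid
vertical straight 2-cut of `P` at position `c`. -/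
theorem stmt0 (P : Finset (ℤ × ℤ)) (c : ℤ)
    (hP : IsPolyomino P) (hmono : ColumnConvex ↑P)
    (h₁ : (PLe P c).Nonempty) (h₂ : (PGt P c).Nonempty) :
    (IsPolyomino (PLe P c) ∧ ColumnConvex ↑(PLe P c)) ∧
    (IsPolyomino (PGt P c) ∧ ColumnConvex ↑(PGt P c)) ∧
    ValidVCut P (PLe P c) (PGt P c) c := by
  have hL := gridConnected_PLe (c := c) hmono hP.2
  have hG := gridConnected_PGt (c := c) hmono hP.2
  exact ⟨⟨⟨h₁, hL⟩, columnConvex_PLe hmono⟩, ⟨⟨h₂, hG⟩, columnConvex_PGt hmono⟩,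
    validVCut_PLe_PGt h₁ h₂ hL hG⟩
end

section
/- Let P be an x-monotone polyomino and let c₁ < ⋯ < c_k be vertical cut positions that decompose P into parts that are all orthogonally convex. Then for every minimum (a, b, y₀) of the upper envelope of P and for every maximum (a, b, y₀) of the lower envelope of P, there is some index i with a ≤ c_i < b, i.e., some cut passes through it. -/
theorem mem_cutPart_self {P : Finset (ℤ × ℤ)} (C : Finset ℤ) {p : ℤ × ℤ} (hp : p ∈ P) :
    p ∈ CutPart P C p :=
  Finset.mem_filter.2 ⟨hp, fun _ _ => Iff.rfl⟩

theorem mem_cutPart_of_forall_notMem_Ico {P : Finset (ℤ × ℤ)} {C : Finset ℤ}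
    {p q : ℤ × ℤ} (hq : q ∈ P) (hpq : p.1 ≤ q.1)
    (hC : ∀ c ∈ C, c ∉ Set.Ico p.1 q.1) : q ∈ CutPart P C p := by
  refine Finset.mem_filter.2 ⟨hq, fun c hc => ⟨fun hqc => hpq.trans hqc, fun hpc => ?_⟩⟩
  by_contra! hcq
  exact hC c hc ⟨hpc, hcq⟩

theorem Decomposes.exists_cut_of_gap {P : Finset (ℤ × ℤ)} {C : Finset ℤ}
    (hdec : Decomposes P C) {a b x y : ℤ} (ha : (a, y) ∈ P) (hb : (b, y) ∈ P)
    (hax : a ≤ x) (hxb : x ≤ b) (hx : (x, y) ∉ P) : ∃ c ∈ C, a ≤ c ∧ c < b := by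
  by_contra! hC
  have hbPart : (b, y) ∈ CutPart P C (a, y) :=
    mem_cutPart_of_forall_notMem_Ico hb (hax.trans hxb) fun c hc hc' =>
      (hC c hc hc'.1).not_gt hc'.2
  have hxPart : (x, y) ∈ CutPart P C (a, y) :=
    (hdec (a, y) ha).2 y a b x (mem_cutPart_self C ha) hbPart hax hxb
  exact hx (Finset.mem_filter.1 hxPart).1

theorem stmt1_general (P : Finset (ℤ × ℤ)) (C : Finset ℤ)
    (hdec : Decomposes P C) :
    (∀ a b y₀ : ℤ, UpperEnvMin ↑P a b y₀ → ∃ c ∈ C, a ≤ c ∧ c < b) ∧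
    (∀ a b y₀ : ℤ, LowerEnvMax ↑P a b y₀ → ∃ c ∈ C, a ≤ c ∧ c < b) := by
  constructor
  · rintro a b y₀ ⟨hab, -, ha, hb, hgap⟩
    exact hdec.exists_cut_of_gap ha hb (by omega) (by omega) (hgap (a + 1) (by omega) (by omega))
  · rintro a b y₀ ⟨hab, -, ha, hb, hgap⟩
    exact hdec.exists_cut_of_gap ha hb (by omega) (by omega) (hgap (a + 1) (by omega) (by omega))

/-- If vertical cut positions `C` decompose an x-monotone polyomino
`P` into orthogonally convex parts, then every minimum of the upper envelope and
every maximum of the lower envelope is passed through by some cut position. -/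
theorem stmt1 (P : Finset (ℤ × ℤ)) (C : Finset ℤ)
    (hP : IsPolyomino P) (hmono : ColumnConvex ↑P)
    (hdec : Decomposes P C) :
    (∀ a b y₀ : ℤ, UpperEnvMin ↑P a b y₀ → ∃ c ∈ C, a ≤ c ∧ c < b) ∧
    (∀ a b y₀ : ℤ, LowerEnvMax ↑P a b y₀ → ∃ c ∈ C, a ≤ c ∧ c < b) :=
  stmt1_general P C hdec
end

section
/- Let P be an x-monotone polyomino and let c₁ < ⋯ < c_k be vertical cut positions such that for every minimum of the upper envelope of P and every maximum of the lower envelope of P, some c_i passes through it. Then every part of the decomposition of P obtained from these cuts is an orthogonally convex polyomino. -/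
open Relation

def GridStep (S : Set (ℤ × ℤ)) (p q : ℤ × ℤ) : Prop := p ∈ S ∧ q ∈ S ∧ Adj p q

instance (S : Set (ℤ × ℤ)) : Std.Symm (GridStep S) where
  symm p q h := ⟨h.2.1, h.1, by
    have := h.2.2; unfold Adj at *; rwa [abs_sub_comm q.1, abs_sub_comm q.2]⟩

lemma adj_right (x y : ℤ) : Adj (x, y) (x + 1, y) := by simp [Adj]

lemma adj_up (x y : ℤ) : Adj (x, y) (x, y + 1) := by simp [Adj]

def ColumnsOverlap (S : Set (ℤ × ℤ)) (a b : ℤ) : Prop :=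
  ∀ x, a ≤ x → x < b → ∃ y, (x, y) ∈ S ∧ (x + 1, y) ∈ S

lemma reflTransGen_gridStep_vertical {S : Set (ℤ × ℤ)} (hS : ColumnConvex S) {x y₁ y₂ : ℤ}
    (h₁ : (x, y₁) ∈ S) (h₂ : (x, y₂) ∈ S) : ReflTransGen (GridStep S) (x, y₁) (x, y₂) := by
  wlog hle : y₁ ≤ y₂ generalizing y₁ y₂
  · exact Std.Symm.symm _ _ (this h₂ h₁ (by omega))
  induction y₂, hle using Int.leInduction with
  | base => rfl
  | succ y hy ih =>
    have hy' : (x, y) ∈ S := hS x y₁ (y + 1) y h₁ h₂ hy (by omega)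
    exact (ih hy').tail ⟨hy', h₂, adj_up x y⟩

lemma columnsOverlap_of_reflTransGen {S : Set (ℤ × ℤ)} {p q : ℤ × ℤ}
    (h : ReflTransGen (GridStep S) p q) : ColumnsOverlap S p.1 q.1 := by
  intro x hp hq
  induction h with
  | refl => omega
  | @tail r q _ hrq ih =>
    by_cases hr : x < r.1
    · exact ih hr
    obtain ⟨hrS, hqS, hadj⟩ := hrq
    unfold Adj at hadj
    obtain ⟨rx, ry⟩ := r
    obtain ⟨qx, qy⟩ := q
    obtain ⟨hrx, hqx, hqy⟩ : rx = x ∧ qx = x + 1 ∧ qy = ry := by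
      dsimp only at *; rw [abs_eq_max_neg, abs_eq_max_neg] at hadj; omega
    subst hrx hqx hqy
    exact ⟨_, hrS, hqS⟩

lemma gridConnected_of_columnsOverlap {S : Set (ℤ × ℤ)} (hS : ColumnConvex S)
    (hover : ∀ q ∈ S, ∀ r ∈ S, ColumnsOverlap S q.1 r.1) : GridConnected S := by
  intro q hq r hr
  show ReflTransGen (GridStep S) q r
  wlog hle : q.1 ≤ r.1 generalizing q r
  · exact Std.Symm.symm _ _ (this r hr q hq (by omega))
  obtain ⟨qx, qy⟩ := q
  obtain ⟨rx, ry⟩ := r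
  dsimp only at hle
  induction rx, hle using Int.leInduction generalizing ry with
  | base => exact reflTransGen_gridStep_vertical hS hq hr
  | succ x hx ih =>
    obtain ⟨y, hy, hy'⟩ := hover _ hq _ hr x hx (by simp)
    exact ((ih y hy).tail ⟨hy, hy', adj_right x y⟩).trans (reflTransGen_gridStep_vertical hS hy' hr)

lemma Int.exists_last_le {Q : ℤ → Prop} {a x : ℤ} (ha : Q a) (hax : a ≤ x) :
    ∃ a', a ≤ a' ∧ a' ≤ x ∧ Q a' ∧ ∀ t, a' < t → t ≤ x → ¬Q t := by
  classical
  obtain ⟨a', ⟨haa', ha'x, ha'⟩, hmax⟩ :=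
    Int.exists_greatest_of_bdd (P := fun t => a ≤ t ∧ t ≤ x ∧ Q t) ⟨x, fun _ h => h.2.1⟩
      ⟨a, le_rfl, hax, ha⟩
  exact ⟨a', haa', ha'x, ha', fun t ht htx hQ => by linarith [hmax t ⟨by omega, htx, hQ⟩]⟩

lemma Int.exists_first_ge {Q : ℤ → Prop} {x b : ℤ} (hb : Q b) (hxb : x ≤ b) :
    ∃ b', x ≤ b' ∧ b' ≤ b ∧ Q b' ∧ ∀ t, x ≤ t → t < b' → ¬Q t := by
  classical
  obtain ⟨b', ⟨hxb', hb'b, hb'⟩, hmin⟩ :=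
    Int.exists_least_of_bdd (P := fun t => x ≤ t ∧ t ≤ b ∧ Q t) ⟨x, fun _ h => h.1⟩
      ⟨b, hxb, le_rfl, hb⟩
  exact ⟨b', hxb', hb'b, hb', fun t hxt ht hQ => by linarith [hmin t ⟨hxt, by omega, hQ⟩]⟩

lemma above_of_row_gap {S : Set (ℤ × ℤ)} (hS : ColumnConvex S) {a b y h₀ : ℤ}
    (hgap : ∀ x, a < x → x < b → (x, y) ∉ S) (hover : ColumnsOverlap S a b)
    (h₀S : (a + 1, h₀) ∈ S) (hy : y < h₀) :
    ∀ x y', a < x → x < b → (x, y') ∈ S → y < y' := by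
  have column : ∀ x u v, a < x → x < b → (x, u) ∈ S → (x, v) ∈ S → y < u → y < v := by
    intro x u v hax hxb hu hv hyu
    by_contra! hvy
    exact hgap x hax hxb (hS x v u y hv hu hvy hyu.le)
  intro x y' hax hxb hx
  induction x, (hax : a + 1 ≤ x) using Int.leInduction generalizing y' with
  | base => exact column _ _ _ (by omega) hxb h₀S hx hy
  | succ x hax ih =>
    obtain ⟨h, hh, hh'⟩ := hover x (by omega) (by omega)
    exact column _ _ _ (by omega) hxb hh' hx (ih h (by omega) hh)

lemma mem_row_succ_of_above {S : Set (ℤ × ℤ)} (hS : ColumnConvex S) {a b y : ℤ}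
    (hab : a + 2 ≤ b) (ha : (a, y) ∈ S) (hb : (b, y) ∈ S) (hover : ColumnsOverlap S a b)
    (habove : ∀ x y', a < x → x < b → (x, y') ∈ S → y < y') :
    (a, y + 1) ∈ S ∧ (b, y + 1) ∈ S := by
  obtain ⟨h, hh, hh'⟩ := hover a le_rfl (by omega)
  obtain ⟨k, hk, hk'⟩ := hover (b - 1) (by omega) (by omega)
  rw [sub_add_cancel] at hk'
  exact ⟨hS a y h (y + 1) ha hh (by omega) (habove (a + 1) h (by omega) (by omega) hh'),
    hS b y k (y + 1) hb hk' (by omega) (habove (b - 1) k (by omega) (by omega) hk)⟩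

/-- Raising the row `y` one step at a time either fills the whole gap, giving the maximum, or
leaves a narrower gap one row higher; finiteness bounds the number of steps. -/
lemma exists_lowerEnvMax_of_above {S : Set (ℤ × ℤ)} (hfin : S.Finite) (hS : ColumnConvex S)
    {a b y : ℤ} (hab : a + 2 ≤ b) (ha : (a, y) ∈ S) (hb : (b, y) ∈ S)
    (hover : ColumnsOverlap S a b) (habove : ∀ x y', a < x → x < b → (x, y') ∈ S → y < y') :
    ∃ a' b' y₀, LowerEnvMax S a' b' y₀ ∧ a ≤ a' ∧ b' ≤ b := by
  obtain ⟨N, hN⟩ := (hfin.image Prod.snd).bddAbove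
  induction hn : (N - y).toNat using Nat.strong_induction_on generalizing a b y with
  | _ n ih =>
    obtain ⟨ha', hb'⟩ := mem_row_succ_of_above hS hab ha hb hover habove
    by_cases hfull : ∀ x, a < x → x < b → (x, y + 1) ∈ S
    · refine ⟨a, b, y + 1, ⟨hab, fun x hax hxb => ?_, by simpa using ha, by simpa using hb,
        fun x hax hxb hx => ?_⟩, le_rfl, le_rfl⟩
      · rcases hax.eq_or_lt with rfl | hax
        · exact ha'
        rcases hxb.eq_or_lt with rfl | hxb
        · exact hb'
        exact hfull x hax hxb
      · simpa using habove x y hax hxb (by simpa using hx)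
    push Not at hfull
    obtain ⟨x, hax, hxb, hx⟩ := hfull
    obtain ⟨h, hh, -⟩ := hover x hax.le hxb
    have hyN : y < N := (habove x h hax hxb hh).trans_le (hN ⟨_, hh, rfl⟩)
    obtain ⟨a₁, haa₁, ha₁x, ha₁, hafter⟩ :=
      Int.exists_last_le (Q := fun t => (t, y + 1) ∈ S) ha' hax.le
    obtain ⟨b₁, hxb₁, hb₁b, hb₁, hbefore⟩ :=
      Int.exists_first_ge (Q := fun t => (t, y + 1) ∈ S) hb' hxb.le
    have ha₁x : a₁ < x := lt_of_le_of_ne ha₁x (by rintro rfl; exact hx ha₁)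
    have hxb₁ : x < b₁ := lt_of_le_of_ne hxb₁ (by rintro rfl; exact hx hb₁)
    have habove₁ : ∀ t y', a₁ < t → t < b₁ → (t, y') ∈ S → y + 1 < y' := by
      intro t y' h₁ h₂ ht
      have hne : (t, y + 1) ∉ S :=
        (le_or_gt t x).elim (hafter t h₁) (fun htx => hbefore t htx.le h₂)
      have hyy' := habove t y' (by omega) (by omega) ht
      exact lt_of_le_of_ne hyy' (by rintro rfl; exact hne ht)
    obtain ⟨a', b', y₀, hmax, h₁, h₂⟩ := ih (N - (y + 1)).toNat (by omega) (by omega) ha₁ hb₁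
      (fun t h₁ h₂ => hover t (by omega) (by omega)) habove₁ rfl
    exact ⟨a', b', y₀, hmax, by omega, by omega⟩

def flipY (q : ℤ × ℤ) : ℤ × ℤ := (q.1, -q.2)

lemma flipY_injective : Function.Injective flipY := fun p q h => by
  simpa [flipY, Prod.ext_iff] using h

@[simp]
lemma flipY_mk (x y : ℤ) : flipY (x, y) = (x, -y) := rfl

lemma ColumnConvex.preimage_flipY {S : Set (ℤ × ℤ)} (hS : ColumnConvex S) :
    ColumnConvex (flipY ⁻¹' S) := fun x y₁ y₂ y h₁ h₂ l₁ l₂ =>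
  hS x (-y₂) (-y₁) (-y) h₂ h₁ (by omega) (by omega)

lemma ColumnsOverlap.preimage_flipY {S : Set (ℤ × ℤ)} {a b : ℤ} (h : ColumnsOverlap S a b) :
    ColumnsOverlap (flipY ⁻¹' S) a b := fun x hax hxb =>
  let ⟨y, hy, hy'⟩ := h x hax hxb
  ⟨-y, by simpa using hy, by simpa using hy'⟩

lemma LowerEnvMax.upperEnvMin_of_preimage_flipY {S : Set (ℤ × ℤ)} {a b y₀ : ℤ}
    (h : LowerEnvMax (flipY ⁻¹' S) a b y₀) : UpperEnvMin S a b (-y₀) := by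
  obtain ⟨hab, hrow, ha, hb, hgap⟩ := h
  have e : -(y₀ - 1) = -y₀ + 1 := by ring
  refine ⟨hab, hrow, ?_, ?_, fun x hax hxb hx => hgap x hax hxb ?_⟩
  · simpa only [Set.mem_preimage, flipY_mk, e] using ha
  · simpa only [Set.mem_preimage, flipY_mk, e] using hb
  · simpa only [Set.mem_preimage, flipY_mk, e] using hx

lemma exists_envExtremum_of_row_gap {S : Set (ℤ × ℤ)} (hfin : S.Finite) (hS : ColumnConvex S)
    (hconn : GridConnected S) {a b x y : ℤ} (ha : (a, y) ∈ S) (hb : (b, y) ∈ S)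
    (hax : a ≤ x) (hxb : x ≤ b) (hx : (x, y) ∉ S) :
    ∃ a' b' y₀, a ≤ a' ∧ b' ≤ b ∧ (UpperEnvMin S a' b' y₀ ∨ LowerEnvMax S a' b' y₀) := by
  obtain ⟨a₁, haa₁, ha₁x, ha₁, hafter⟩ := Int.exists_last_le (Q := fun t => (t, y) ∈ S) ha hax
  obtain ⟨b₁, hxb₁, hb₁b, hb₁, hbefore⟩ := Int.exists_first_ge (Q := fun t => (t, y) ∈ S) hb hxb
  have ha₁x : a₁ < x := lt_of_le_of_ne ha₁x (by rintro rfl; exact hx ha₁)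
  have hxb₁ : x < b₁ := lt_of_le_of_ne hxb₁ (by rintro rfl; exact hx hb₁)
  have hgap : ∀ t, a₁ < t → t < b₁ → (t, y) ∉ S := fun t h₁ h₂ =>
    (le_or_gt t x).elim (hafter t h₁) (fun h => hbefore t h.le h₂)
  have hover : ColumnsOverlap S a₁ b₁ := columnsOverlap_of_reflTransGen (hconn _ ha₁ _ hb₁)
  obtain ⟨h₀, -, h₀S⟩ := hover a₁ le_rfl (by omega)
  rcases lt_or_gt_of_ne (show h₀ ≠ y by rintro rfl; exact hgap _ (by omega) (by omega) h₀S)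
    with hlt | hgt
  · obtain ⟨a', b', y₀, hmax, h₁, h₂⟩ := exists_lowerEnvMax_of_above
      (hfin.preimage flipY_injective.injOn) hS.preimage_flipY (y := -y) (by omega)
      (by simpa using ha₁) (by simpa using hb₁) hover.preimage_flipY
      (above_of_row_gap hS.preimage_flipY (fun t h₁ h₂ => by simpa using hgap t h₁ h₂)
        hover.preimage_flipY (h₀ := -h₀) (by simpa using h₀S) (by omega))
    exact ⟨a', b', -y₀, by omega, by omega, Or.inl hmax.upperEnvMin_of_preimage_flipY⟩
  · obtain ⟨a', b', y₀, hmax, h₁, h₂⟩ := exists_lowerEnvMax_of_above hfin hS (by omega) ha₁ hb₁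
      hover (above_of_row_gap hS hgap hover h₀S hgt)
    exact ⟨a', b', y₀, by omega, by omega, Or.inr hmax⟩

section CutPart

variable {P : Finset (ℤ × ℤ)} {C : Finset ℤ} {p q r : ℤ × ℤ}

lemma mem_cutPart : q ∈ CutPart P C p ↔ q ∈ P ∧ ∀ c ∈ C, (q.1 ≤ c ↔ p.1 ≤ c) :=
  Finset.mem_filter

lemma notMem_Ico_of_mem_cutPart (hq : q ∈ CutPart P C p) (hr : r ∈ CutPart P C p) {c : ℤ}
    (hc : c ∈ C) : c ∉ Set.Ico q.1 r.1 := fun ⟨h₁, h₂⟩ => by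
  have := (mem_cutPart.1 hq).2 c hc
  have := (mem_cutPart.1 hr).2 c hc
  omega

lemma mem_cutPart_of_le_of_le {s : ℤ × ℤ} (hq : q ∈ CutPart P C p) (hr : r ∈ CutPart P C p)
    (hs : s ∈ P) (h₁ : q.1 ≤ s.1) (h₂ : s.1 ≤ r.1) : s ∈ CutPart P C p := by
  refine mem_cutPart.2 ⟨hs, fun c hc => ?_⟩
  have := (mem_cutPart.1 hq).2 c hc
  have := (mem_cutPart.1 hr).2 c hc
  omega

lemma columnConvex_cutPart (hP : ColumnConvex ↑P) : ColumnConvex ↑(CutPart P C p) := by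
  intro x y₁ y₂ y h₁ h₂ l₁ l₂
  rw [Finset.mem_coe, mem_cutPart] at h₁ h₂ ⊢
  exact ⟨hP x y₁ y₂ y h₁.1 h₂.1 l₁ l₂, h₁.2⟩

lemma gridConnected_cutPart (hP : ColumnConvex ↑P) (hconn : GridConnected ↑P) :
    GridConnected ↑(CutPart P C p) := by
  refine gridConnected_of_columnsOverlap (columnConvex_cutPart hP) fun q hq r hr x h₁ h₂ => ?_
  obtain ⟨y, hy, hy'⟩ := columnsOverlap_of_reflTransGen
    (hconn q (Finset.filter_subset _ _ hq) r (Finset.filter_subset _ _ hr)) x h₁ h₂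
  exact ⟨y, mem_cutPart_of_le_of_le hq hr hy h₁ h₂.le,
    mem_cutPart_of_le_of_le hq hr hy' (by dsimp only; omega) h₂⟩

lemma rowConvex_cutPart (hP : ColumnConvex ↑P) (hconn : GridConnected ↑P)
    (hup : ∀ a b y₀ : ℤ, UpperEnvMin ↑P a b y₀ → ∃ c ∈ C, a ≤ c ∧ c < b)
    (hlo : ∀ a b y₀ : ℤ, LowerEnvMax ↑P a b y₀ → ∃ c ∈ C, a ≤ c ∧ c < b) :
    RowConvex ↑(CutPart P C p) := by
  intro y x₁ x₂ x h₁ h₂ hx₁ hx₂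
  refine mem_cutPart_of_le_of_le h₁ h₂ ?_ hx₁ hx₂
  by_contra hx
  obtain ⟨a', b', y₀, ha', hb', hext⟩ := exists_envExtremum_of_row_gap P.finite_toSet hP hconn
    (mem_cutPart.1 h₁).1 (mem_cutPart.1 h₂).1 hx₁ hx₂ hx
  obtain ⟨c, hc, hac, hcb⟩ := hext.elim (hup _ _ _) (hlo _ _ _)
  exact notMem_Ico_of_mem_cutPart h₁ h₂ hc ⟨by dsimp only; omega, by dsimp only; omega⟩

end CutPart

/-- If vertical cut positions `C` pass through every minimum of the
upper envelope and every maximum of the lower envelope of an x-monotone polyomino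
`P`, then every part of the resulting decomposition is an orthogonally convex
polyomino. -/
theorem stmt2 (P : Finset (ℤ × ℤ)) (C : Finset ℤ)
    (hP : IsPolyomino P) (hmono : ColumnConvex ↑P)
    (hup : ∀ a b y₀ : ℤ, UpperEnvMin ↑P a b y₀ → ∃ c ∈ C, a ≤ c ∧ c < b)
    (hlo : ∀ a b y₀ : ℤ, LowerEnvMax ↑P a b y₀ → ∃ c ∈ C, a ≤ c ∧ c < b) :
    ∀ p ∈ P, IsPolyomino (CutPart P C p) ∧ OrthoConvex ↑(CutPart P C p) := by
  intro p hp
  have hpp : p ∈ CutPart P C p := mem_cutPart.2 ⟨hp, fun _ _ => Iff.rfl⟩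
  exact ⟨⟨⟨p, hpp⟩, gridConnected_cutPart hmono hP.2⟩,
    columnConvex_cutPart hmono, rowConvex_cutPart hmono hP.2 hup hlo⟩
end

section
/- Let P be an x-monotone polyomino with decomposition number d(P) ≥ 1. Then there exists c ∈ ℤ such that P≤c and P>c are both nonempty and d(P≤c) ≤ ⌊d(P)/2⌋ and d(P>c) ≤ ⌊d(P)/2⌋. -/
/-! Cut at the median of an optimal set of cut positions: the positions on either side of it
decompose the two pieces, and each side carries at most `⌊d(P)/2⌋` of them. Both pieces are
nonempty because a cut position missing `P` on one side could be dropped, contradicting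
optimality. -/

open Finset

theorem exists_mem_card_filter_lt_eq {α : Type*} [LinearOrder α] (s : Finset α) {k : ℕ}
    (hk : k < #s) : ∃ c ∈ s, #(s.filter (· < c)) = k := by
  induction s using Finset.induction_on_max generalizing k with
  | empty => simp at hk
  | insert a s hlt ih =>
    have has : a ∉ s := fun h => lt_irrefl a (hlt a h)
    rw [card_insert_of_notMem has] at hk
    rcases Nat.lt_succ_iff_lt_or_eq.mp hk with hk | rfl
    · obtain ⟨c, hc, rfl⟩ := ih hk
      refine ⟨c, mem_insert_of_mem hc, ?_⟩
      rw [filter_insert, if_neg (hlt c hc).not_gt]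
    · refine ⟨a, mem_insert_self a s, ?_⟩
      rw [filter_insert, if_neg (lt_irrefl a), filter_true_of_mem hlt]

theorem card_filter_lt_add_card_filter_gt {α : Type*} [LinearOrder α] {s : Finset α} {c : α}
    (hc : c ∈ s) : #(s.filter (· < c)) + #(s.filter (c < ·)) + 1 = #s := by
  rw [← card_erase_add_one hc, ← card_filter_add_card_filter_not (s := s.erase c) (· < c)]
  have hlt : (s.erase c).filter (· < c) = s.filter (· < c) := by
    ext x; simp only [mem_filter, mem_erase]; grind
  have hgt : (s.erase c).filter (¬ · < c) = s.filter (c < ·) := by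
    ext x; simp only [mem_filter, mem_erase]; grind
  rw [hlt, hgt]

section Decomposition

variable {P : Finset (ℤ × ℤ)} {C : Finset ℤ} {c : ℤ}

theorem decompNumber_le_card (h : Decomposes P C) : decompNumber P ≤ #C :=
  Nat.sInf_le ⟨C, rfl, h⟩

theorem exists_decomposes_card_eq_decompNumber (hd : decompNumber P ≠ 0) :
    ∃ C : Finset ℤ, #C = decompNumber P ∧ Decomposes P C := by
  have hne : {k | ∃ C : Finset ℤ, #C = k ∧ Decomposes P C}.Nonempty :=
    Set.nonempty_iff_ne_empty.mpr fun h => hd (by rw [decompNumber, h, Nat.sInf_empty])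
  exact Nat.sInf_mem hne

theorem Decomposes.erase (h : Decomposes P C)
    (hc : ∀ p ∈ P, ∀ q ∈ P, (q.1 ≤ c ↔ p.1 ≤ c)) : Decomposes P (C.erase c) := by
  intro p hp
  have hpart : CutPart P (C.erase c) p = CutPart P C p := by
    ext q
    simp only [CutPart, mem_filter, mem_erase]
    grind
  rw [hpart]
  exact h p hp

theorem Decomposes.pLe (h : Decomposes P C) (hc : c ∈ C) :
    Decomposes (PLe P c) (C.filter (· < c)) := by
  intro p hp
  obtain ⟨hpP, hpc⟩ := mem_filter.mp hp
  have hpart : CutPart (PLe P c) (C.filter (· < c)) p = CutPart P C p := by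
    ext q
    simp only [CutPart, PLe, mem_filter]
    grind
  rw [hpart]
  exact h p hpP

theorem Decomposes.pGt (h : Decomposes P C) (hc : c ∈ C) :
    Decomposes (PGt P c) (C.filter (c < ·)) := by
  intro p hp
  obtain ⟨hpP, hpc⟩ := mem_filter.mp hp
  have hpart : CutPart (PGt P c) (C.filter (c < ·)) p = CutPart P C p := by
    ext q
    simp only [CutPart, PGt, mem_filter]
    grind
  rw [hpart]
  exact h p hpP

theorem Decomposes.pLe_nonempty_and_pGt_nonempty (h : Decomposes P C)
    (hC : #C = decompNumber P) (hc : c ∈ C) : (PLe P c).Nonempty ∧ (PGt P c).Nonempty := by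
  by_contra hempty
  have hside : ∀ p ∈ P, ∀ q ∈ P, (q.1 ≤ c ↔ p.1 ≤ c) := by
    intro p hp q hq
    rcases not_and_or.mp hempty with hle | hgt
    · rw [not_nonempty_iff_eq_empty, PLe, filter_eq_empty_iff] at hle
      exact iff_of_false (hle hq) (hle hp)
    · rw [not_nonempty_iff_eq_empty, PGt, filter_eq_empty_iff] at hgt
      exact iff_of_true (not_lt.mp (hgt hq)) (not_lt.mp (hgt hp))
  have hle := decompNumber_le_card (h.erase hside)
  rw [card_erase_of_mem hc, hC] at hle
  have hpos : 0 < #C := card_pos.mpr ⟨c, hc⟩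
  omega

end Decomposition

theorem stmt4_general (P : Finset (ℤ × ℤ)) (hd : 1 ≤ decompNumber P) :
    ∃ c : ℤ, (PLe P c).Nonempty ∧ (PGt P c).Nonempty ∧
      decompNumber (PLe P c) ≤ decompNumber P / 2 ∧
      decompNumber (PGt P c) ≤ decompNumber P / 2 := by
  obtain ⟨C, hC, hdec⟩ := exists_decomposes_card_eq_decompNumber (P := P) (by omega)
  obtain ⟨c, hc, hbelow⟩ :=
    exists_mem_card_filter_lt_eq C (k := (decompNumber P - 1) / 2) (by omega)
  have hsplit := card_filter_lt_add_card_filter_gt hc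
  obtain ⟨hle, hgt⟩ := hdec.pLe_nonempty_and_pGt_nonempty hC hc
  refine ⟨c, hle, hgt, ?_, ?_⟩
  · have := decompNumber_le_card (hdec.pLe hc)
    omega
  · have := decompNumber_le_card (hdec.pGt hc)
    omega

/-- Any x-monotone polyomino with `d(P) ≥ 1` admits a vertical cut
position `c` (with both pieces nonempty) halving the decomposition number of
both pieces. -/
theorem stmt4 (P : Finset (ℤ × ℤ)) (hP : IsPolyomino P) (hmono : ColumnConvex ↑P)
    (hd : 1 ≤ decompNumber P) :
    ∃ c : ℤ, (PLe P c).Nonempty ∧ (PGt P c).Nonempty ∧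
      decompNumber (PLe P c) ≤ decompNumber P / 2 ∧
      decompNumber (PGt P c) ≤ decompNumber P / 2 :=
  stmt4_general P hd
end

section
/- Let P be a polyomino and let (P₁, P₂) be a valid vertical or horizontal straight 2-cut of P along a locally reflex tile. Then w(P₁) + w(P₂) ≤ w(P) − 1, where w(Q) denotes the number of reflex witnesses of a polyomino Q; i.e., each straight 2-cut along a locally reflex tile strictly decreases the total number of reflex witnesses, and no new reflex witness is created in either piece. -/
lemma adj_iff {p q : ℤ × ℤ} :
    Adj p q ↔ (p.1 = q.1 ∧ (p.2 = q.2 + 1 ∨ q.2 = p.2 + 1)) ∨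
      (p.2 = q.2 ∧ (p.1 = q.1 + 1 ∨ q.1 = p.1 + 1)) := by
  unfold Adj
  constructor
  · intro h
    rcases abs_cases (p.1 - q.1) with ⟨h1, _⟩ | ⟨h1, _⟩ <;>
      rcases abs_cases (p.2 - q.2) with ⟨h2, _⟩ | ⟨h2, _⟩ <;> omega
  · rintro (⟨h1, h2 | h2⟩ | ⟨h1, h2 | h2⟩) <;> simp [h1, h2]

lemma mem_squareCells {s q : ℤ × ℤ} :
    q ∈ SquareCells s ↔ (q.1 = s.1 ∨ q.1 = s.1 + 1) ∧ (q.2 = s.2 ∨ q.2 = s.2 + 1) := by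
  obtain ⟨a, b⟩ := q
  simp only [SquareCells, Finset.mem_insert, Finset.mem_singleton, Prod.ext_iff]
  tauto

lemma card_squareCells (s : ℤ × ℤ) : (SquareCells s).card = 4 := by
  rw [SquareCells, Finset.card_insert_of_notMem, Finset.card_insert_of_notMem,
    Finset.card_insert_of_notMem, Finset.card_singleton] <;> simp [Prod.ext_iff]

lemma card_squareCells_inter_add_card_squareCells_inter {P P₁ P₂ : Finset (ℤ × ℤ)}
    (hu : P₁ ∪ P₂ = P) (hd : Disjoint P₁ P₂) (s : ℤ × ℤ) :
    (SquareCells s ∩ P₁).card + (SquareCells s ∩ P₂).card = (SquareCells s ∩ P).card := by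
  rw [← hu, Finset.inter_union_distrib_left, Finset.card_union_of_disjoint
    (hd.mono Finset.inter_subset_right Finset.inter_subset_right)]

lemma ReflexWitness.exists_adj_of_notMem {A : Finset (ℤ × ℤ)} {s q : ℤ × ℤ}
    (hs : ReflexWitness A s) (hq : q ∈ SquareCells s) (hqA : q ∉ A) :
    ∃ n ∈ A, ∃ m ∈ A, Adj n q ∧ n.1 = q.1 ∧ Adj m q ∧ m.2 = q.2 := by
  have hrest : SquareCells s ∩ A = (SquareCells s).erase q :=
    Finset.eq_of_subset_of_card_le
      (fun x hx => Finset.mem_erase.2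
        ⟨fun hxq => hqA (hxq ▸ (Finset.mem_inter.1 hx).2), (Finset.mem_inter.1 hx).1⟩)
      (by rw [Finset.card_erase_of_mem hq, card_squareCells]; exact hs.ge)
  have hmem : ∀ x ∈ SquareCells s, x ≠ q → x ∈ A := fun x hx hxq =>
    (Finset.mem_inter.1 (hrest ▸ Finset.mem_erase.2 ⟨hxq, hx⟩)).2
  rw [mem_squareCells] at hq
  refine ⟨(q.1, 2 * s.2 + 1 - q.2), hmem _ ?_ ?_, (2 * s.1 + 1 - q.1, q.2), hmem _ ?_ ?_,
    ?_, rfl, ?_, rfl⟩ <;>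
    simp only [mem_squareCells, adj_iff, ne_eq, Prod.ext_iff, true_and, and_true] <;> omega

lemma ReflexWitness.union {A B : Finset (ℤ × ℤ)} {s : ℤ × ℤ} (hs : ReflexWitness A s)
    (hd : Disjoint A B)
    (hdir : (∀ p ∈ A, ∀ q ∈ B, Adj p q → p.1 ≠ q.1) ∨
      (∀ p ∈ A, ∀ q ∈ B, Adj p q → p.2 ≠ q.2)) :
    ReflexWitness (A ∪ B) s := by
  have hB : SquareCells s ∩ B = ∅ := by
    refine Finset.eq_empty_of_forall_notMem fun q hq => ?_
    obtain ⟨hqs, hqB⟩ := Finset.mem_inter.1 hq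
    obtain ⟨n, hnA, m, hmA, hnq, hn, hmq, hm⟩ :=
      hs.exists_adj_of_notMem hqs (Finset.disjoint_right.1 hd hqB)
    rcases hdir with hv | hh
    · exact hv n hnA q hqB hnq hn
    · exact hh m hmA q hqB hmq hm
  rw [ReflexWitness, Finset.inter_union_distrib_left, hB, Finset.union_empty]
  exact hs

lemma reflexWitness_of_union {P P₁ P₂ : Finset (ℤ × ℤ)} (hu : P₁ ∪ P₂ = P)
    (hd : Disjoint P₁ P₂)
    (hdir : (∀ p ∈ P₁, ∀ q ∈ P₂, Adj p q → p.1 ≠ q.1) ∨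
      (∀ p ∈ P₁, ∀ q ∈ P₂, Adj p q → p.2 ≠ q.2))
    {s : ℤ × ℤ} (hs : ReflexWitness P₁ s ∨ ReflexWitness P₂ s) : ReflexWitness P s := by
  rw [← hu]
  rcases hs with hs | hs
  · exact hs.union hd hdir
  · rw [Finset.union_comm]
    exact hs.union hd.symm <| hdir.imp
      (fun h q hq p hp hqp => (h p hp q hq hqp.symm).symm)
      (fun h q hq p hp hqp => (h p hp q hq hqp.symm).symm)

lemma finite_setOf_reflexWitness (P : Finset (ℤ × ℤ)) :
    {s : ℤ × ℤ | ReflexWitness P s}.Finite := by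
  refine (P.biUnion fun p => SquareCells (p.1 - 1, p.2 - 1)).finite_toSet.subset fun s hs => ?_
  obtain ⟨x, hx⟩ := Finset.card_pos.1 (by rw [show _ = 3 from hs]; norm_num)
  obtain ⟨hxs, hxP⟩ := Finset.mem_inter.1 hx
  rw [mem_squareCells] at hxs
  exact Finset.mem_coe.2 (Finset.mem_biUnion.2 ⟨x, hxP, by rw [mem_squareCells]; omega⟩)

lemma Set.ncard_add_ncard_add_one_le {α : Type*} {A B W : Set α} {a : α} (hW : W.Finite)
    (hA : A ⊆ W) (hB : B ⊆ W) (hAB : Disjoint A B) (ha : a ∈ W) (haA : a ∉ A)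
    (haB : a ∉ B) : A.ncard + B.ncard + 1 ≤ W.ncard := by
  have hAf := hW.subset hA
  have hBf := hW.subset hB
  calc A.ncard + B.ncard + 1 = (insert a (A ∪ B)).ncard := by
        rw [Set.ncard_insert_of_notMem (by simp [haA, haB]) (hAf.union hBf),
          Set.ncard_union_eq hAB hAf hBf]
    _ ≤ W.ncard := Set.ncard_le_ncard (Set.insert_subset ha (Set.union_subset hA hB)) hW

lemma wRef_add_wRef_add_one_le {P P₁ P₂ : Finset (ℤ × ℤ)} (hu : P₁ ∪ P₂ = P)
    (hd : Disjoint P₁ P₂)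
    (hlift : ∀ s, ReflexWitness P₁ s ∨ ReflexWitness P₂ s → ReflexWitness P s)
    (href : AlongReflex P P₁ P₂) : wRef P₁ + wRef P₂ + 1 ≤ wRef P := by
  have hcard := card_squareCells_inter_add_card_squareCells_inter hu hd
  have hle4 : ∀ s, (SquareCells s ∩ P).card ≤ 4 := fun s =>
    (Finset.card_le_card Finset.inter_subset_left).trans (card_squareCells s).le
  obtain ⟨s₀, hs₀, hs₀₁, hs₀₂⟩ := href
  have h₁ := Finset.card_pos.2 hs₀₁
  have h₂ := Finset.card_pos.2 hs₀₂
  have h₀ : (SquareCells s₀ ∩ P).card = 3 := hs₀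
  refine Set.ncard_add_ncard_add_one_le (finite_setOf_reflexWitness P)
    (fun s hs => hlift s (Or.inl hs)) (fun s hs => hlift s (Or.inr hs))
    (Set.disjoint_left.2 fun s (hs₁ : _ = 3) (hs₂ : _ = 3) => ?_) hs₀
    (fun (hs : _ = 3) => ?_) (fun (hs : _ = 3) => ?_)
  · have := hcard s
    have := hle4 s
    omega
  all_goals
    have := hcard s₀
    omega

/-- A valid vertical or horizontal straight 2-cut along a locally
reflex tile strictly decreases the total number of reflex witnesses:
`w(P₁) + w(P₂) ≤ w(P) - 1`. -/
theorem stmt11 (P P₁ P₂ : Finset (ℤ × ℤ))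
    (hcut : (∃ c : ℤ, ValidVCut P P₁ P₂ c) ∨ (∃ c : ℤ, ValidHCut P P₁ P₂ c))
    (href : AlongReflex P P₁ P₂) :
    wRef P₁ + wRef P₂ + 1 ≤ wRef P := by
  rcases hcut with ⟨c, ⟨hu, hd, -, -, -, -, hadj⟩, -⟩ | ⟨c, ⟨hu, hd, -, -, -, -, hadj⟩, -⟩
  · have hhoriz : ∀ p ∈ P₁, ∀ q ∈ P₂, Adj p q → p.1 ≠ q.1 := fun p hp q hq hpq => by
      have := hadj p hp q hq hpq
      omega
    exact wRef_add_wRef_add_one_le hu hd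
      (fun _ => reflexWitness_of_union hu hd (Or.inl hhoriz)) href
  · have hvert : ∀ p ∈ P₁, ∀ q ∈ P₂, Adj p q → p.2 ≠ q.2 := fun p hp q hq hpq => by
      have := hadj p hp q hq hpq
      omega
    exact wRef_add_wRef_add_one_le hu hd
      (fun _ => reflexWitness_of_union hu hd (Or.inr hvert)) href
end
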